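/- Let F be a finite field with 16 elements and f a monic irreducible polynomial of degree d over F. Then the ideal ⟨u^i v^j⟩ of the ring (F[x]/⟨f⟩)[u,v]/⟨u^k, v^4⟩ has cardinality 16^{(k−i)(4−j)d}. -/

import Mathlib

/-!
In `R[σ]` modulo a monomial ideal `J = ⟨X^n | n ∈ K⟩`, the monomials `X^m` with no `n ∈ K` below
`m` span an `R`-linear complement of `J`, as every other monomial lies in `J`. Hence the image of
`⟨X^a⟩` is a free `R`-module on the monomials `X^m` with `a ≤ m` and `m` outside `J`; for
`⟨u^i v^j⟩` in `R[u,v]/⟨u^k, v^4⟩` these are `u^a v^b` with `i ≤ a < k`, `j ≤ b < 4`. Finally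
`F[x]/⟨f⟩` is free of rank `deg f` over `F`, so it has `16^d` elements.
-/

namespace MvPolynomial

variable {σ R : Type*} [CommRing R]

theorem mem_ideal_span_monomial_singleton {a : σ →₀ ℕ} {p : MvPolynomial σ R} :
    p ∈ Ideal.span {monomial a (1 : R)} ↔ ∀ m ∈ p.support, a ≤ m := by
  rw [← Set.image_singleton (f := fun s => monomial s (1 : R)), mem_ideal_span_monomial_image]
  simp only [Set.mem_singleton_iff, exists_eq_left]

theorem monomial_mem_ideal_span_monomial_image {K : Set (σ →₀ ℕ)} {m n : σ →₀ ℕ}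
    (hn : n ∈ K) (hnm : n ≤ m) (c : R) :
    monomial m c ∈ Ideal.span ((fun s => monomial s (1 : R)) '' K) := by
  rw [mem_ideal_span_monomial_image]
  intro m' hm'
  exact ⟨n, hn, (Finset.mem_singleton.mp (support_monomial_subset hm')).symm ▸ hnm⟩

theorem exists_mem_restrictSupport_sub_mem_ideal_span_monomial_image
    {K s : Set (σ →₀ ℕ)} (q : MvPolynomial σ R)
    (hq : ∀ m ∈ q.support, m ∉ s → ∃ n ∈ K, n ≤ m) :
    ∃ p ∈ restrictSupport R s, q - p ∈ Ideal.span ((fun s => monomial s (1 : R)) '' K) := by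
  classical
  refine ⟨∑ m ∈ q.support with m ∈ s, monomial m (coeff m q), ?_, ?_⟩
  · exact Submodule.sum_mem _ fun m hm =>
      (monomial_mem_restrictSupport R).mpr (Or.inl (Finset.mem_filter.mp hm).2)
  · have hsplit := Finset.sum_filter_add_sum_filter_not q.support (· ∈ s)
      (fun m => monomial m (coeff m q))
    rw [← q.as_sum, ← eq_sub_iff_add_eq'] at hsplit
    rw [← hsplit]
    refine Ideal.sum_mem _ fun m hm => ?_
    obtain ⟨hmq, hms⟩ := Finset.mem_filter.mp hm
    obtain ⟨n, hn, hnm⟩ := hq m hmq hms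
    exact monomial_mem_ideal_span_monomial_image hn hnm _

theorem eq_zero_of_mem_restrictSupport_of_mem_ideal_span_monomial_image
    {K s : Set (σ →₀ ℕ)} (hs : ∀ m ∈ s, ∀ n ∈ K, ¬ n ≤ m) {p : MvPolynomial σ R}
    (hps : p ∈ restrictSupport R s)
    (hpK : p ∈ Ideal.span ((fun s => monomial s (1 : R)) '' K)) : p = 0 := by
  rw [← support_eq_empty, Finset.eq_empty_iff_forall_notMem]
  intro m hm
  obtain ⟨n, hn, hnm⟩ := mem_ideal_span_monomial_image.mp hpK m hm
  exact hs m (hps hm) n hn hnm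

def standardExponentsAbove (a : σ →₀ ℕ) (K : Set (σ →₀ ℕ)) : Set (σ →₀ ℕ) :=
  {m | a ≤ m ∧ ∀ n ∈ K, ¬ n ≤ m}

theorem natCard_span_mk_monomial (a : σ →₀ ℕ) (K : Set (σ →₀ ℕ)) :
    Nat.card (Ideal.span {Ideal.Quotient.mk (Ideal.span ((fun s => monomial s (1 : R)) '' K))
      (monomial a 1)}) = Nat.card (restrictSupport R (standardExponentsAbove a K)) := by
  set J := Ideal.span ((fun s => monomial s (1 : R)) '' K)
  have hmem : ∀ p ∈ restrictSupport R (standardExponentsAbove a K),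
      Ideal.Quotient.mk J p ∈ Ideal.span {Ideal.Quotient.mk J (monomial a 1)} := by
    intro p hp
    rw [← Set.image_singleton, ← Ideal.map_span]
    exact Ideal.mem_map_of_mem _ (mem_ideal_span_monomial_singleton.mpr fun m hm => (hp hm).1)
  refine (Nat.card_eq_of_bijective (fun p => ⟨Ideal.Quotient.mk J p, hmem p p.2⟩) ⟨?_, ?_⟩).symm
  · rintro ⟨p, hp⟩ ⟨p', hp'⟩ h
    have hdiff : p - p' ∈ J := Ideal.Quotient.eq.mp (congrArg Subtype.val h)
    exact Subtype.ext (sub_eq_zero.mp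
      (eq_zero_of_mem_restrictSupport_of_mem_ideal_span_monomial_image (fun m hm => hm.2)
        (sub_mem hp hp') hdiff))
  · rintro ⟨z, hz⟩
    obtain ⟨y, rfl⟩ := Ideal.mem_span_singleton'.mp hz
    obtain ⟨q, rfl⟩ := Ideal.Quotient.mk_surjective y
    have hqa : ∀ m ∈ (q * monomial a 1).support, a ≤ m :=
      mem_ideal_span_monomial_singleton.mp (Ideal.mul_mem_left _ _ (Ideal.subset_span rfl))
    obtain ⟨p, hp, hqp⟩ :=
      exists_mem_restrictSupport_sub_mem_ideal_span_monomial_image (K := K)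
        (s := standardExponentsAbove a K) (q * monomial a 1) fun m hm hms => by
          simpa [standardExponentsAbove, hqa m hm] using hms
    exact ⟨⟨p, hp⟩, Subtype.ext (by simpa [← map_mul] using (Ideal.Quotient.eq.mpr hqp).symm)⟩

theorem natCard_restrictSupport {s : Set (σ →₀ ℕ)} (hs : s.Finite) :
    Nat.card (restrictSupport R s) = Nat.card R ^ Nat.card s := by
  have := hs.to_subtype
  rw [Nat.card_congr (basisRestrictSupport R s).equivFun.toEquiv, Nat.card_fun]

theorem standardExponentsAbove_fin_two (i j k l : ℕ) :
    standardExponentsAbove (Finsupp.single 0 i + Finsupp.single 1 j)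
      {Finsupp.single (0 : Fin 2) k, Finsupp.single 1 l} =
      (Finsupp.equivFunOnFinite.trans (finTwoArrowEquiv ℕ)) ⁻¹' (Set.Ico i k ×ˢ Set.Ico j l) := by
  ext m
  simp [standardExponentsAbove, Finsupp.le_def, Fin.forall_fin_two]
  omega

theorem finite_standardExponentsAbove_fin_two (i j k l : ℕ) :
    (standardExponentsAbove (Finsupp.single 0 i + Finsupp.single 1 j)
      {Finsupp.single (0 : Fin 2) k, Finsupp.single 1 l}).Finite := by
  rw [standardExponentsAbove_fin_two]
  exact ((Set.finite_Ico i k).prod (Set.finite_Ico j l)).preimage (Equiv.injective _).injOn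

theorem natCard_standardExponentsAbove_fin_two (i j k l : ℕ) :
    Nat.card (standardExponentsAbove (Finsupp.single 0 i + Finsupp.single 1 j)
      {Finsupp.single (0 : Fin 2) k, Finsupp.single 1 l}) = (k - i) * (l - j) := by
  rw [standardExponentsAbove_fin_two, Nat.card_coe_set_eq,
    Set.ncard_preimage_of_injective_subset_range (Equiv.injective _)
      (by rw [Equiv.range_eq_univ]; exact Set.subset_univ _), Set.ncard_prod,
    Set.ncard_Ico_nat, Set.ncard_Ico_nat]

end MvPolynomial

theorem AdjoinRoot.natCard_of_monic {R : Type*} [CommRing R] {f : Polynomial R}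
    (hf : f.Monic) : Nat.card (AdjoinRoot f) = Nat.card R ^ f.natDegree := by
  rw [Nat.card_congr (AdjoinRoot.powerBasis' hf).basis.equivFun.toEquiv, Nat.card_fun,
    Nat.card_fin, AdjoinRoot.powerBasis'_dim]

open Polynomial

theorem stmt8_general (F : Type) [Field F] [Fintype F] (hF : Fintype.card F = 16)
    (f : Polynomial F) (hmonic : f.Monic)
    (k i j : ℕ) :
    let S := Polynomial F ⧸ Ideal.span {f}
    let I : Ideal (@MvPolynomial (Fin 2) S CommRing.toCommSemiring ⧸
        Ideal.span {(MvPolynomial.X 0 : @MvPolynomial (Fin 2) S CommRing.toCommSemiring) ^ k, MvPolynomial.X 1 ^ 4}) :=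
      Ideal.span {Ideal.Quotient.mk _ (MvPolynomial.X 0 ^ i * MvPolynomial.X 1 ^ j)}
    Nat.card I = 16 ^ ((k - i) * (4 - j) * f.natDegree) := by
  intro S I
  have hS : Nat.card S = 16 ^ f.natDegree := by
    rw [show Nat.card S = _ from AdjoinRoot.natCard_of_monic hmonic, Nat.card_eq_fintype_card, hF]
  have hrel : ({MvPolynomial.X 0 ^ k, MvPolynomial.X 1 ^ 4} : Set (MvPolynomial (Fin 2) S)) =
      (fun s => MvPolynomial.monomial s 1) '' {Finsupp.single 0 k, Finsupp.single 1 4} := by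
    simp [Set.image_insert_eq, MvPolynomial.X_pow_eq_monomial]
  have hgen : (MvPolynomial.X 0 ^ i * MvPolynomial.X 1 ^ j : MvPolynomial (Fin 2) S) =
      MvPolynomial.monomial (Finsupp.single 0 i + Finsupp.single 1 j) 1 := by
    simp [MvPolynomial.X_pow_eq_monomial]
  simp only [I, hgen]
  rw [hrel, MvPolynomial.natCard_span_mk_monomial,
    MvPolynomial.natCard_restrictSupport (MvPolynomial.finite_standardExponentsAbove_fin_two ..),
    hS, MvPolynomial.natCard_standardExponentsAbove_fin_two, ← pow_mul, mul_comm f.natDegree]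

/-- For `F` a field with 16 elements and `f` monic irreducible of degree `d` over `F`,
the ideal `⟨uⁱvʲ⟩` of `(F[x]/⟨f⟩)[u,v]/⟨uᵏ, v⁴⟩` has cardinality `16^((k-i)(4-j)d)`. -/
theorem stmt8 (F : Type) [Field F] [Fintype F] (hF : Fintype.card F = 16)
    (f : Polynomial F) (hmonic : f.Monic) (hirr : Irreducible f)
    (k i j : ℕ) (hk : 0 < k) (hi : i ≤ k - 1) (hj : j ≤ 3) :
    let S := Polynomial F ⧸ Ideal.span {f}
    let I : Ideal (@MvPolynomial (Fin 2) S CommRing.toCommSemiring ⧸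
        Ideal.span {(MvPolynomial.X 0 : @MvPolynomial (Fin 2) S CommRing.toCommSemiring) ^ k, MvPolynomial.X 1 ^ 4}) :=
      Ideal.span {Ideal.Quotient.mk _ (MvPolynomial.X 0 ^ i * MvPolynomial.X 1 ^ j)}
    Nat.card I = 16 ^ ((k - i) * (4 - j) * f.natDegree) :=
  stmt8_general F hF f hmonic k i j
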